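/- arXiv:math/0006041 — 4 statements merged into one kernel-verified Lean document; each statement's English description precedes it below -/
import Mathlib

section
/- For any symmetric 2×2 real matrices A (with A = (φ_{,αβ})) and invertible symmetric g₀, the identity A_{αμ} A_{βγ} − A_{αβ} A_{μγ} = −λ₀ (g₀_{αμ} g₀_{βγ} − g₀_{αβ} g₀_{γμ}) holds for all indices α,β,γ,μ ∈ {1,2}, where λ₀ = (1/2)[(g₀⁻¹ A g₀⁻¹)^{αβ} A_{αβ} − (tr(g₀⁻¹ A))²]. -/
set_option maxHeartbeats 1000000

open Matrix

/-- Proposition 1: for symmetric 2×2 A (the Hessian φ_{,αβ}) and invertible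
symmetric g₀, A_{αμ}A_{βγ} − A_{αβ}A_{μγ} = −lam0(g₀_{αμ}g₀_{βγ} − g₀_{αβ}g₀_{γμ}),
where lam0 = (1/2)[φ^{αβ}φ_{αβ} − (φ^α_α)²]. -/
theorem hessian_two_dim_identity (g₀ A : Matrix (Fin 2) (Fin 2) ℝ)
    (hg₀sym : g₀.IsSymm) (hg₀inv : IsUnit g₀.det) (hAsym : A.IsSymm)
    (lam0 : ℝ)
    (hlam0 : lam0 = (1 / 2) * ((g₀⁻¹ * A * g₀⁻¹ * A).trace - ((g₀⁻¹ * A).trace) ^ 2)) :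
    ∀ α β γ μ : Fin 2,
      A α μ * A β γ - A α β * A μ γ =
        -lam0 * (g₀ α μ * g₀ β γ - g₀ α β * g₀ γ μ) := by
  have hd : g₀.det ≠ 0 := hg₀inv.ne_zero
  have hA : A 1 0 = A 0 1 := (congrFun (congrFun hAsym 1) 0).symm
  have hg : g₀ 1 0 = g₀ 0 1 := (congrFun (congrFun hg₀sym 1) 0).symm
  have hd' : g₀ 0 0 * g₀ 1 1 - g₀ 0 1 * g₀ 1 0 ≠ 0 := by
    rwa [Matrix.det_fin_two] at hd
  have hinv : g₀⁻¹ = g₀.det⁻¹ • g₀.adjugate := by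
    rw [Matrix.inv_def, Ring.inverse_eq_inv']
  have hlam : lam0 = -A.det / g₀.det := by
    rw [hlam0, hinv]
    simp only [Matrix.trace_fin_two, Matrix.mul_apply, Fin.sum_univ_two,
      Matrix.smul_apply, Matrix.adjugate_fin_two,
      Matrix.of_apply, Matrix.cons_val', Matrix.cons_val_zero, Matrix.cons_val_one,
      Matrix.head_cons, Matrix.head_fin_const, Matrix.empty_val',
      Matrix.cons_val_fin_one, smul_eq_mul, hA, hg]
    field_simp
    simp only [Matrix.det_fin_two, hA, hg]
    ring
  intro α β γ μ
  rw [hlam]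
  simp only [Matrix.det_fin_two]
  field_simp
  fin_cases α <;> fin_cases β <;> fin_cases γ <;> fin_cases μ <;>
    simp [hA, hg] <;> ring
end

section
/- Let φ : ℝ² → ℝ be smooth, g₀ an invertible symmetric 2×2 constant matrix, ε = ±1, ρ = 1 + ε(∇φ)ᵀ g₀⁻¹ ∇φ, and h = g₀ + ε ∇φ (∇φ)ᵀ with inverse h⁻¹ = g₀⁻¹ − (ε/ρ)(g₀⁻¹∇φ)(g₀⁻¹∇φ)ᵀ (assume ρ ≠ 0 everywhere). If the mean curvature H = ρ^{-1/2} h^{μν} φ_{,μν} vanishes identically, then ∂_α[√ρ · h^{αβ} ∂_β φ] = 0. -/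
open Matrix

/-- Partial derivative of a scalar function on ℝ² in direction `i`. -/
noncomputable def pd (i : Fin 2) (f : (Fin 2 → ℝ) → ℝ) (x : Fin 2 → ℝ) : ℝ :=
  fderiv ℝ f x (Pi.single i 1)

/-- part of Proposition 2: if the mean curvature
H = ρ^{-1/2} h^{μν} φ_{,μν} vanishes identically, then ∂_α[√ρ · h^{αβ} ∂_β φ] = 0. -/
theorem minimal_surface_divergence_identity
    (φ : (Fin 2 → ℝ) → ℝ) (hφ : ContDiff ℝ (⊤ : ℕ∞) φ)
    (g₀ : Matrix (Fin 2) (Fin 2) ℝ) (hg₀sym : g₀.IsSymm) (hg₀inv : IsUnit g₀.det)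
    (ε : ℝ) (hε : ε = 1 ∨ ε = -1)
    (ρ : (Fin 2 → ℝ) → ℝ)
    (hρ : ∀ x, ρ x = 1 + ε * ((fun μ => pd μ φ x) ⬝ᵥ g₀⁻¹.mulVec fun μ => pd μ φ x))
    (hρpos : ∀ x, 0 < ρ x)
    (h : (Fin 2 → ℝ) → Matrix (Fin 2) (Fin 2) ℝ)
    (hh : ∀ x, h x = g₀ + ε • vecMulVec (fun μ => pd μ φ x) (fun μ => pd μ φ x))
    (hinv : (Fin 2 → ℝ) → Matrix (Fin 2) (Fin 2) ℝ)
    (hhinv : ∀ x, hinv x = g₀⁻¹ -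
      (ε / ρ x) • vecMulVec (g₀⁻¹.mulVec fun μ => pd μ φ x)
        (g₀⁻¹.mulVec fun μ => pd μ φ x))
    (H : (Fin 2 → ℝ) → ℝ)
    (hH : ∀ x, H x = (Real.sqrt (ρ x))⁻¹ * ∑ μ, ∑ ν, hinv x μ ν * pd μ (pd ν φ) x)
    (hmin : ∀ x, H x = 0) :
    ∀ x, ∑ α, pd α (fun y => Real.sqrt (ρ y) * ∑ β, hinv y α β * pd β φ y) x = 0 := by
  -- basic facts
  have hε2 : ε * ε = 1 := by rcases hε with rfl | rfl <;> norm_num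
  have hsym : ∀ i j, g₀⁻¹ i j = g₀⁻¹ j i := by
    intro i j
    have : (g₀⁻¹)ᵀ = g₀⁻¹ := by
      rw [Matrix.transpose_nonsing_inv, hg₀sym]
    conv_lhs => rw [← this]
    rfl
  -- smoothness of first partials
  have hn : ∀ β, ContDiff ℝ (⊤ : ℕ∞) (pd β φ) := by
    intro β
    exact (hφ.fderiv_right (le_refl _)).clm_apply contDiff_const
  have hnd : ∀ β y, DifferentiableAt ℝ (pd β φ) y := fun β y =>
    ((hn β).differentiable (by simp)) y
  -- entries of hinv
  have hinv_entry : ∀ y α β, hinv y α β =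
      g₀⁻¹ α β - (ε / ρ y) * ((∑ ν, g₀⁻¹ α ν * pd ν φ y) * (∑ ν, g₀⁻¹ β ν * pd ν φ y)) := by
    intro y α β
    rw [hhinv y]
    simp [Matrix.sub_apply, Matrix.smul_apply, Matrix.vecMulVec_apply, Matrix.mulVec,
      dotProduct]
    left
    fin_cases α <;> fin_cases β <;> simp
  -- ρ as an explicit sum
  have hρ' : ∀ y, ρ y = 1 + ε * ∑ μ, pd μ φ y * ∑ ν, g₀⁻¹ μ ν * pd ν φ y := by
    intro y
    rw [hρ y]
    simp [dotProduct, Matrix.mulVec]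
  intro x
  -- abbreviations at the point x
  have hrpos : 0 < ρ x := hρpos x
  set s := Real.sqrt (ρ x) with hs
  have hspos : 0 < s := Real.sqrt_pos.mpr hrpos
  have hss : s * s = ρ x := Real.mul_self_sqrt hrpos.le
  set A : Fin 2 → Fin 2 → ℝ := fun α β => pd α (pd β φ) x with hA
  -- Step 1: rewrite the integrand
  have hfun : ∀ α : Fin 2, (fun y => Real.sqrt (ρ y) * ∑ β, hinv y α β * pd β φ y)
      = fun y => (∑ β, g₀⁻¹ α β * pd β φ y) * (Real.sqrt (ρ y))⁻¹ := by
    intro α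
    funext y
    have hry : 0 < ρ y := hρpos y
    have hsy : 0 < Real.sqrt (ρ y) := Real.sqrt_pos.mpr hry
    have hssy : Real.sqrt (ρ y) * Real.sqrt (ρ y) = ρ y := Real.mul_self_sqrt hry.le
    set p : Fin 2 → ℝ := fun β => pd β φ y with hp
    set u : Fin 2 → ℝ := fun β => ∑ ν, g₀⁻¹ β ν * p ν with hu
    have hq : ε * ∑ μ, p μ * u μ = ρ y - 1 := by
      have := hρ' y
      linarith [this]
    have h1 : (∑ β, hinv y α β * p β) = u α - (ε / ρ y) * (u α * ∑ β, u β * p β) := by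
      have e0 : ∀ β, hinv y α β * p β = g₀⁻¹ α β * p β - (ε / ρ y) * (u α * (u β * p β)) := by
        intro β
        rw [hinv_entry y α β]
        ring
      rw [Finset.sum_congr rfl (fun β _ => e0 β), Finset.sum_sub_distrib,
        ← Finset.mul_sum, ← Finset.mul_sum]
    have h2 : (∑ β, u β * p β) = ∑ μ, p μ * u μ := by
      exact Finset.sum_congr rfl (fun β _ => mul_comm _ _)
    rw [h1, h2]
    have hpu : ∑ μ, p μ * u μ = ε * (ρ y - 1) := by
      have e : ε * (ε * ∑ μ, p μ * u μ) = ε * (ρ y - 1) := by rw [hq]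
      rw [← e, ← mul_assoc, hε2, one_mul]
    rw [hpu]
    have e1 : ε / ρ y * (u α * (ε * (ρ y - 1))) = (ε * ε) * (u α * (ρ y - 1) / ρ y) := by
      ring
    rw [e1, hε2, one_mul]
    have e2 : u α - u α * (ρ y - 1) / ρ y = u α / ρ y := by
      field_simp
      ring
    rw [e2, div_eq_mul_inv]
    rw [show (ρ y)⁻¹ = (Real.sqrt (ρ y))⁻¹ * (Real.sqrt (ρ y))⁻¹ from by rw [← mul_inv, hssy]]
    rw [show Real.sqrt (ρ y) * (u α * ((Real.sqrt (ρ y))⁻¹ * (Real.sqrt (ρ y))⁻¹))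
      = (Real.sqrt (ρ y) * (Real.sqrt (ρ y))⁻¹) * (u α * (Real.sqrt (ρ y))⁻¹) from by ring,
      mul_inv_cancel₀ hsy.ne', one_mul]
  -- Step 2: derivatives.
  have hD : ∀ β, HasFDerivAt (pd β φ) (fderiv ℝ (pd β φ) x) x := fun β =>
    (hnd β x).hasFDerivAt
  have hAe : ∀ α β, (fderiv ℝ (pd β φ) x) (Pi.single α 1) = A α β := fun _ _ => rfl
  -- derivative of ρ
  set Q : (Fin 2 → ℝ) →L[ℝ] ℝ :=
    ∑ μ, (pd μ φ x • (∑ ν, g₀⁻¹ μ ν • fderiv ℝ (pd ν φ) x)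
      + (∑ ν, g₀⁻¹ μ ν * pd ν φ x) • fderiv ℝ (pd μ φ) x) with hQ
  have hρderiv : HasFDerivAt ρ (ε • Q) x := by
    have hqd : HasFDerivAt (fun y => ∑ μ, pd μ φ y * ∑ ν, g₀⁻¹ μ ν * pd ν φ y) Q x := by
      apply HasFDerivAt.fun_sum
      intro μ _
      exact (hD μ).mul (HasFDerivAt.fun_sum (fun ν _ => (hD ν).const_mul (g₀⁻¹ μ ν)))
    have e : ρ = fun y => 1 + ε * ∑ μ, pd μ φ y * ∑ ν, g₀⁻¹ μ ν * pd ν φ y :=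
      funext hρ'
    rw [e]
    exact (hqd.const_mul ε).const_add 1
  -- derivative of (√ρ)⁻¹
  have hsinvderiv : HasFDerivAt (fun y => (Real.sqrt (ρ y))⁻¹)
      ((-(1 / (2 * s)) / s ^ 2) • (ε • Q)) x := by
    have h1 : HasDerivAt (fun t => (Real.sqrt t)⁻¹) (-(1 / (2 * s)) / s ^ 2) (ρ x) :=
      (Real.hasDerivAt_sqrt hrpos.ne').inv hspos.ne'
    exact h1.comp_hasFDerivAt x hρderiv
  -- the per-α derivative value
  have key : ∀ α : Fin 2,
      pd α (fun y => Real.sqrt (ρ y) * ∑ β, hinv y α β * pd β φ y) x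
      = s⁻¹ * ∑ β, hinv x α β * A α β := by
    intro α
    rw [hfun α]
    have hV : HasFDerivAt (fun y => ∑ β, g₀⁻¹ α β * pd β φ y)
        (∑ β, g₀⁻¹ α β • fderiv ℝ (pd β φ) x) x :=
      HasFDerivAt.fun_sum (fun β _ => (hD β).const_mul (g₀⁻¹ α β))
    have hprod := hV.mul hsinvderiv
    have hval : pd α (fun y => (∑ β, g₀⁻¹ α β * pd β φ y) * (Real.sqrt (ρ y))⁻¹) x
        = ((∑ β, g₀⁻¹ α β * pd β φ x) • ((-(1 / (2 * s)) / s ^ 2) • (ε • Q))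
          + s⁻¹ • (∑ β, g₀⁻¹ α β • fderiv ℝ (pd β φ) x)) (Pi.single α 1) := by
      rw [← hprod.fderiv]
      rfl
    rw [hval]
    simp only [hQ]
    simp only [ContinuousLinearMap.add_apply, ContinuousLinearMap.smul_apply,
      ContinuousLinearMap.coe_sum', Finset.sum_apply, smul_eq_mul, hAe]
    rw [Finset.sum_congr rfl (fun β (_ : β ∈ Finset.univ) =>
      congrArg (· * A α β) (hinv_entry x α β))]
    have hg : g₀⁻¹ 0 1 = g₀⁻¹ 1 0 := hsym 0 1
    have hepr : ε / ρ x = ε * (s⁻¹ * s⁻¹) := by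
      rw [← hss, div_eq_mul_inv, mul_inv]
    have hcoef : (-(1 / (2 * s)) / s ^ 2) = -(s⁻¹ * s⁻¹ * s⁻¹) / 2 := by
      field_simp
    simp only [hepr, hcoef, Fin.sum_univ_two]
    linear_combination (ε * (s⁻¹ * s⁻¹ * s⁻¹) * (g₀⁻¹ α 0 * pd 0 φ x + g₀⁻¹ α 1 * pd 1 φ x)
      * (A α 0 * pd 1 φ x - A α 1 * pd 0 φ x) / 2) * hg
  -- conclude
  have hS : (∑ μ, ∑ ν, hinv x μ ν * A μ ν) = 0 := by
    have h0 : s⁻¹ * ∑ μ, ∑ ν, hinv x μ ν * A μ ν = 0 := by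
      rw [hA, hs, ← hH x]
      exact hmin x
    have hsne : (s : ℝ)⁻¹ ≠ 0 := inv_ne_zero hspos.ne'
    exact (mul_eq_zero.mp h0).resolve_left hsne
  calc ∑ α, pd α (fun y => Real.sqrt (ρ y) * ∑ β, hinv y α β * pd β φ y) x
      = ∑ α, s⁻¹ * ∑ β, hinv x α β * A α β := Finset.sum_congr rfl (fun α _ => key α)
    _ = s⁻¹ * ∑ α, ∑ β, hinv x α β * A α β := by rw [Finset.mul_sum]
    _ = 0 := by rw [hS, mul_zero]
end

section
/- Under the same hypotheses (φ smooth on ℝ², g₀ constant invertible symmetric, ρ = 1 + ε(∇φ)ᵀg₀⁻¹∇φ > 0, h = g₀ + ε∇φ(∇φ)ᵀ), if H = ρ^{-1/2} h^{μν} φ_{,μν} = 0 identically, then ∂_α(√ρ · h^{αβ}) = 0 for each β, where h^{αβ} denotes the entries of h⁻¹. -/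
open Matrix

lemma pd_smooth {f : (Fin 2 → ℝ) → ℝ} (hf : ContDiff ℝ (⊤ : ℕ∞) f) (i : Fin 2) :
    ContDiff ℝ (⊤ : ℕ∞) (pd i f) :=
  (hf.fderiv_right (by simp)).clm_apply contDiff_const

lemma pd_comm {f : (Fin 2 → ℝ) → ℝ} (hf : ContDiff ℝ (⊤ : ℕ∞) f) (i j : Fin 2) (x : Fin 2 → ℝ) :
    pd i (pd j f) x = pd j (pd i f) x := by
  have hdf : Differentiable ℝ f := hf.differentiable (by simp)
  have hf' : ContDiff ℝ (⊤ : ℕ∞) (fderiv ℝ f) := hf.fderiv_right (by simp)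
  have hdf' : DifferentiableAt ℝ (fderiv ℝ f) x := (hf'.differentiable (by simp)) x
  have hsymm := second_derivative_symmetric (f := f) (f' := fderiv ℝ f)
      (f'' := fderiv ℝ (fderiv ℝ f) x) (fun y => (hdf y).hasFDerivAt) hdf'.hasFDerivAt
  have key : ∀ k l : Fin 2,
      pd k (pd l f) x = fderiv ℝ (fderiv ℝ f) x (Pi.single k 1) (Pi.single l 1) := by
    intro k l
    show fderiv ℝ (fun y => (fderiv ℝ f y) ((fun _ => (Pi.single l 1 : Fin 2 → ℝ)) y)) x (Pi.single k 1) = _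
    rw [fderiv_clm_apply hdf' (differentiableAt_const _)]
    simp
  rw [key, key, hsymm]

set_option maxHeartbeats 2000000 in
/-- part of Proposition 2: if the mean curvature
H = ρ^{-1/2} h^{μν} φ_{,μν} vanishes identically, then ∂_α(√ρ · h^{αβ}) = 0 for each β. -/
theorem minimal_surface_inverse_metric_divergence
    (φ : (Fin 2 → ℝ) → ℝ) (hφ : ContDiff ℝ (⊤ : ℕ∞) φ)
    (g₀ : Matrix (Fin 2) (Fin 2) ℝ) (hg₀sym : g₀.IsSymm) (hg₀inv : IsUnit g₀.det)
    (ε : ℝ) (hε : ε = 1 ∨ ε = -1)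
    (ρ : (Fin 2 → ℝ) → ℝ)
    (hρ : ∀ x, ρ x = 1 + ε * ((fun μ => pd μ φ x) ⬝ᵥ g₀⁻¹.mulVec fun μ => pd μ φ x))
    (hρpos : ∀ x, 0 < ρ x)
    (h : (Fin 2 → ℝ) → Matrix (Fin 2) (Fin 2) ℝ)
    (hh : ∀ x, h x = g₀ + ε • vecMulVec (fun μ => pd μ φ x) (fun μ => pd μ φ x))
    (hinv : (Fin 2 → ℝ) → Matrix (Fin 2) (Fin 2) ℝ)
    (hhinv : ∀ x, hinv x = g₀⁻¹ -
      (ε / ρ x) • vecMulVec (g₀⁻¹.mulVec fun μ => pd μ φ x)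
        (g₀⁻¹.mulVec fun μ => pd μ φ x))
    (H : (Fin 2 → ℝ) → ℝ)
    (hH : ∀ x, H x = (Real.sqrt (ρ x))⁻¹ * ∑ μ, ∑ ν, hinv x μ ν * pd μ (pd ν φ) x)
    (hmin : ∀ x, H x = 0) :
    ∀ x, ∀ β : Fin 2, ∑ α, pd α (fun y => Real.sqrt (ρ y) * hinv y α β) x = 0 := by
  intro x β
  set G := g₀⁻¹ with hGdef
  -- symmetry of G
  have hGT : Gᵀ = G := by
    rw [hGdef, Matrix.transpose_nonsing_inv, hg₀sym]
  have hGsym' : ∀ i j, G i j = G j i := by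
    intro i j
    have h2 := congrFun (congrFun hGT j) i
    rwa [Matrix.transpose_apply] at h2
  have hGsym : G 1 0 = G 0 1 := hGsym' 1 0
  -- smoothness of first derivatives
  have hP : ∀ i : Fin 2, ContDiff ℝ (⊤ : ℕ∞) (pd i φ) := fun i => pd_smooth hφ i
  have hD : ∀ i : Fin 2, HasFDerivAt (pd i φ) (fderiv ℝ (pd i φ) x) x :=
    fun i => (((hP i).differentiable (by simp)) x).hasFDerivAt
  set D : Fin 2 → (Fin 2 → ℝ) →L[ℝ] ℝ := fun i => fderiv ℝ (pd i φ) x with hDdef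
  -- rewrite ρ
  have hρfun : ρ = fun y => 1 + ε * ∑ μ, pd μ φ y * ∑ ν, G μ ν * pd ν φ y := by
    funext y; rw [hρ y]; simp [dotProduct, Matrix.mulVec]
  -- derivative of sums V i
  have hVd : ∀ i : Fin 2, HasFDerivAt (fun y => ∑ j, G i j * pd j φ y)
      (∑ j, G i j • D j) x :=
    fun i => HasFDerivAt.fun_sum fun j _ => (hD j).const_mul (G i j)
  -- derivative of ρ
  set Dρ : (Fin 2 → ℝ) →L[ℝ] ℝ :=
    ε • ∑ μ, (pd μ φ x • (∑ ν, G μ ν • D ν) + (∑ ν, G μ ν * pd ν φ x) • D μ) with hDρdef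
  have hρd : HasFDerivAt ρ Dρ x := by
    rw [hρfun]
    exact ((HasFDerivAt.fun_sum fun μ _ => (hD μ).fun_mul (hVd μ)).const_mul ε).const_add 1
  -- sqrt
  have hspos : 0 < Real.sqrt (ρ x) := Real.sqrt_pos.mpr (hρpos x)
  set s := Real.sqrt (ρ x) with hsdef
  have hss : s * s = ρ x := Real.mul_self_sqrt (hρpos x).le
  have hsq : HasFDerivAt (fun y => Real.sqrt (ρ y)) ((1 / (2 * s)) • Dρ) x :=
    hρd.sqrt (hρpos x).ne'
  have hisq : HasFDerivAt (fun y => (Real.sqrt (ρ y))⁻¹)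
      ((-(s ^ 2)⁻¹) • ((1 / (2 * s)) • Dρ)) x :=
    (hasDerivAt_inv hspos.ne').comp_hasFDerivAt x hsq
  -- rewrite the function under pd
  have key : ∀ y, Real.sqrt (ρ y) * (ε / ρ y) = ε * (Real.sqrt (ρ y))⁻¹ := by
    intro y
    have h1 : Real.sqrt (ρ y) * Real.sqrt (ρ y) = ρ y := Real.mul_self_sqrt (hρpos y).le
    have h2 : Real.sqrt (ρ y) ≠ 0 := (Real.sqrt_pos.mpr (hρpos y)).ne'
    have h3 : ρ y ≠ 0 := (hρpos y).ne'
    field_simp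
    linear_combination ε * h1
  have hFeq : ∀ α : Fin 2, (fun y => Real.sqrt (ρ y) * hinv y α β)
      = fun y => Real.sqrt (ρ y) * G α β
        - ε * ((Real.sqrt (ρ y))⁻¹ *
          ((∑ j, G α j * pd j φ y) * (∑ j, G β j * pd j φ y))) := by
    intro α; funext y
    rw [hhinv y]
    simp only [Matrix.sub_apply, Matrix.smul_apply, vecMulVec_apply, smul_eq_mul,
      Matrix.mulVec, dotProduct, ← hGdef]
    rw [mul_sub]
    congr 1
    rw [show Real.sqrt (ρ y) * (ε / ρ y * ((∑ j, G α j * pd j φ y) * (∑ j, G β j * pd j φ y)))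
        = (Real.sqrt (ρ y) * (ε / ρ y)) * ((∑ j, G α j * pd j φ y) * (∑ j, G β j * pd j φ y))
        from by ring, key y]
    ring
  -- the scalar formula for each pd α F
  have hb : ∀ i j : Fin 2, D j (Pi.single i 1) = pd i (pd j φ) x := fun _ _ => rfl
  have hDρe : ∀ i : Fin 2, Dρ (Pi.single i 1)
      = ε * ∑ μ, (pd μ φ x * ∑ ν, G μ ν * pd i (pd ν φ) x
          + (∑ ν, G μ ν * pd ν φ x) * pd i (pd μ φ) x) := by
    intro i
    rw [hDρdef]
    simp [ContinuousLinearMap.sum_apply, hb]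
    ring
  have hFα : ∀ α : Fin 2, pd α (fun y => Real.sqrt (ρ y) * hinv y α β) x
      = G α β * (1 / (2 * s) * Dρ (Pi.single α 1))
        - ε * ((Real.sqrt (ρ x))⁻¹ *
            ((∑ j, G α j * pd j φ x) • (∑ j, G β j • D j)
              + (∑ j, G β j * pd j φ x) • (∑ j, G α j • D j)) (Pi.single α 1)
          + ((∑ j, G α j * pd j φ x) * (∑ j, G β j * pd j φ x))
            * (-(s ^ 2)⁻¹ * (1 / (2 * s) * Dρ (Pi.single α 1)))) := by
    intro α
    rw [hFeq α]
    have h1 := (hsq.mul_const (G α β)).fun_sub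
      ((hisq.fun_mul ((hVd α).fun_mul (hVd β))).const_mul ε)
    show fderiv ℝ _ x (Pi.single α 1) = _
    rw [h1.fderiv]
    simp only [ContinuousLinearMap.coe_sub', Pi.sub_apply, ContinuousLinearMap.smul_apply,
      ContinuousLinearMap.add_apply, smul_eq_mul]
    try ring
  -- E = 0 from minimality
  have hE : (∑ μ, ∑ ν, hinv x μ ν * pd μ (pd ν φ) x) = 0 := by
    have h0 := hmin x
    rw [hH x] at h0
    rcases mul_eq_zero.mp h0 with h' | h'
    · exact absurd h' (inv_ne_zero hspos.ne')
    · exact h'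
  have hinvE : ∀ μ ν : Fin 2, hinv x μ ν
      = G μ ν - ε / ρ x * ((∑ j, G μ j * pd j φ x) * (∑ j, G ν j * pd j φ x)) := by
    intro μ ν
    rw [hhinv x]
    simp only [Matrix.sub_apply, Matrix.smul_apply, vecMulVec_apply, smul_eq_mul, Matrix.mulVec,
      dotProduct]
  have hbsym : pd 1 (pd 0 φ) x = pd 0 (pd 1 φ) x := pd_comm hφ 1 0 x
  have hkey : (∑ α, pd α (fun y => Real.sqrt (ρ y) * hinv y α β) x)
      = -(ε * (∑ j, G β j * pd j φ x) * s⁻¹)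
        * (∑ μ, ∑ ν, hinv x μ ν * pd μ (pd ν φ) x) := by
    rw [Fin.sum_univ_two, hFα 0, hFα 1, hDρe 0, hDρe 1]
    simp only [hinvE, ContinuousLinearMap.add_apply, ContinuousLinearMap.smul_apply,
      ContinuousLinearMap.sum_apply, smul_eq_mul, hb, Fin.sum_univ_two]
    rw [← hss]
    rw [Real.sqrt_mul_self hspos.le]
    rw [hbsym, hGsym]
    rw [hGsym' β 0, hGsym' β 1]
    field_simp
    ring
  rw [hkey, hE, mul_zero]
end

section
/- If g = ρ^{-1/2} h with h = g₀ + ε∇φ(∇φ)ᵀ as above, then det g = det g₀. In particular det g is constant (independent of the point) and nonzero. -/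
open Matrix

/-- for g = ρ^{-1/2} h with h = g₀ + ε∇φ(∇φ)ᵀ, det g = det g₀ is constant
and nonzero. -/
theorem det_conformal_metric_constant
    (φ : (Fin 2 → ℝ) → ℝ) (hφ : ContDiff ℝ (⊤ : ℕ∞) φ)
    (g₀ : Matrix (Fin 2) (Fin 2) ℝ) (hg₀sym : g₀.IsSymm) (hg₀inv : IsUnit g₀.det)
    (ε : ℝ) (hε : ε = 1 ∨ ε = -1)
    (ρ : (Fin 2 → ℝ) → ℝ)
    (hρ : ∀ x, ρ x = 1 + ε * ((fun μ => pd μ φ x) ⬝ᵥ g₀⁻¹.mulVec fun μ => pd μ φ x))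
    (hρpos : ∀ x, 0 < ρ x)
    (h : (Fin 2 → ℝ) → Matrix (Fin 2) (Fin 2) ℝ)
    (hh : ∀ x, h x = g₀ + ε • vecMulVec (fun μ => pd μ φ x) (fun μ => pd μ φ x))
    (g : (Fin 2 → ℝ) → Matrix (Fin 2) (Fin 2) ℝ)
    (hg : ∀ x, g x = (Real.sqrt (ρ x))⁻¹ • h x) :
    (∀ x, (g x).det = g₀.det) ∧ g₀.det ≠ 0 := by
  have hd : g₀.det ≠ 0 := hg₀inv.ne_zero
  refine ⟨fun x => ?_, hd⟩
  set v : Fin 2 → ℝ := fun μ => pd μ φ x with hv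
  have hsym : g₀ 0 1 = g₀ 1 0 := by
    have := congrFun (congrFun hg₀sym.eq 1) 0
    simpa [Matrix.transpose_apply] using this
  set S : ℝ := g₀ 1 1 * v 0 ^ 2 - 2 * g₀ 0 1 * v 0 * v 1 + g₀ 0 0 * v 1 ^ 2 with hS
  have hρx : ρ x = 1 + ε * (g₀.det)⁻¹ * S := by
    have hinv : g₀⁻¹ = (g₀.det)⁻¹ • !![g₀ 1 1, -g₀ 0 1; -g₀ 1 0, g₀ 0 0] := by
      rw [Matrix.inv_def, Matrix.adjugate_fin_two, Ring.inverse_eq_inv']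
    rw [hρ x, hinv, hS]
    simp [Matrix.mulVec, dotProduct, Fin.sum_univ_two, Matrix.smul_apply]
    rw [hsym]; ring
  have hmul : ρ x * g₀.det = g₀.det + ε * S := by
    rw [hρx]; field_simp
  have hdeth : (h x).det = ρ x * g₀.det := by
    rw [hmul, hh x, Matrix.det_fin_two, Matrix.det_fin_two, hS]
    simp only [Matrix.add_apply, Matrix.smul_apply, Matrix.vecMulVec_apply, smul_eq_mul]
    rw [hsym]; ring
  have hρx0 : ρ x ≠ 0 := (hρpos x).ne'
  rw [hg x, Matrix.det_smul, hdeth]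
  have hpow : ((Real.sqrt (ρ x))⁻¹) ^ (Fintype.card (Fin 2)) = (ρ x)⁻¹ := by
    rw [Fintype.card_fin, inv_pow, Real.sq_sqrt (hρpos x).le]
  rw [hpow, ← mul_assoc, inv_mul_cancel₀ hρx0, one_mul]
end
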